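/- arXiv:1405.1232 — 8 statements merged into one kernel-verified Lean document; each statement's English description precedes it below -/
import Mathlib

section
/- Let G = K ⋊ H be a finite group acting on the coset space G/H. Then G is semiprimitive on G/H (i.e., every normal subgroup of G is either transitive or semiregular on G/H) if and only if for every normal subgroup M of K that is invariant under conjugation by H and with M ≠ K, the action of H on K/M by conjugation is faithful. -/
/-! For a normal subgroup `N`, transitivity on `G ⧸ H` amounts to `N ⊔ H = ⊤` and
semiregularity to `N ⊓ H = ⊥`.

If `H` is faithful on every proper `H`-invariant quotient of `K` and `N` is normal with
`N ⊔ H ≠ ⊤`, then `N` does not contain `K`, and `N ⊓ H` acts trivially on `K ⧸ (N ⊓ K)`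
because `⁅N, K⁆ ≤ N ⊓ K`; hence `N ⊓ H = ⊥`.

Conversely, given `M`, the elements of `H` acting trivially on `K ⧸ M` form, together with
`M`, a normal subgroup of `G` (the preimage of `H ⊓ C(K)` in `G ⧸ M`) lying in `M ⊔ H`. It
is not transitive, since by Dedekind's law `(M ⊔ H) ⊓ K = M ⊔ (H ⊓ K) = M ≠ K`, so it is
semiregular and the kernel is trivial. -/

open Pointwise

def Subgroup.IsTransitiveOn {G : Type*} [Group G] (Ω : Type*) [MulAction G Ω]
    (N : Subgroup G) : Prop :=
  ∀ a b : Ω, ∃ n ∈ N, n • a = b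

def Subgroup.IsSemiregularOn {G : Type*} [Group G] (Ω : Type*) [MulAction G Ω]
    (N : Subgroup G) : Prop :=
  ∀ n ∈ N, ∀ a : Ω, n • a = a → n = 1

def IsSemiprimitiveAction (G Ω : Type*) [Group G] [MulAction G Ω] : Prop :=
  MulAction.IsPretransitive G Ω ∧
    ∀ N : Subgroup G, N.Normal → N.IsTransitiveOn Ω ∨ N.IsSemiregularOn Ω

namespace Subgroup

variable {G : Type*} [Group G]

theorem normal_of_sup_eq_top {K H M : Subgroup G} (hsup : K ⊔ H = ⊤)
    (hK : K ≤ normalizer (M : Set G)) (hH : H ≤ normalizer (M : Set G)) : M.Normal :=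
  normalizer_eq_top_iff.mp (top_le_iff.mp (hsup ▸ sup_le hK hH))

theorem normal_inf_centralizer {K H : Subgroup G} [K.Normal] (hsup : K ⊔ H = ⊤) :
    (H ⊓ centralizer (K : Set G)).Normal := by
  refine normal_of_sup_eq_top hsup (le_normalizer_iff.mpr fun k hk x hx => ?_)
    (le_normalizer_iff.mpr fun h hh x hx => ?_)
  · rw [hx.2 k hk, mul_inv_cancel_right]
    exact hx
  · exact ⟨H.mul_mem (H.mul_mem hh hx.1) (H.inv_mem hh), normal_centralizer.conj_mem x hx.2 h⟩

theorem eq_of_sup_eq_top_of_inf_eq_bot {K H M : Subgroup G} [M.Normal] (hMK : M ≤ K)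
    (hdisj : K ⊓ H = ⊥) (hsup : M ⊔ H = ⊤) : M = K := by
  have hdedekind := mul_inf_assoc M H K hMK
  rw [inf_comm, hdisj, coe_bot, Set.singleton_one, mul_one, ← normal_mul, hsup, coe_top,
    Set.univ_inter] at hdedekind
  exact le_antisymm hMK (SetLike.coe_subset_coe.mp hdedekind.ge)

theorem isTransitiveOn_quotient_iff (N H : Subgroup G) [N.Normal] :
    N.IsTransitiveOn (G ⧸ H) ↔ N ⊔ H = ⊤ := by
  rw [← coe_eq_univ, normal_mul, Set.eq_univ_iff_forall]
  constructor
  · intro htr g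
    obtain ⟨n, hn, hng⟩ := htr ((1 : G) : G ⧸ H) g
    rw [MulAction.Quotient.smul_mk, smul_eq_mul, mul_one, QuotientGroup.eq] at hng
    exact ⟨n, hn, n⁻¹ * g, hng, mul_inv_cancel_left n g⟩
  · intro hNH a b
    obtain ⟨x, rfl⟩ := QuotientGroup.mk_surjective a
    obtain ⟨y, rfl⟩ := QuotientGroup.mk_surjective b
    obtain ⟨n, hn, h, hh, hnh⟩ := hNH (x⁻¹ * y)
    refine ⟨x * n * x⁻¹, Normal.conj_mem inferInstance n hn x, ?_⟩
    rw [MulAction.Quotient.smul_mk, smul_eq_mul, QuotientGroup.eq, inv_mul_cancel_right,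
      mul_inv_rev, mul_assoc, ← hnh, inv_mul_cancel_left]
    exact hh

theorem isSemiregularOn_quotient_iff (N H : Subgroup G) [hN : N.Normal] :
    N.IsSemiregularOn (G ⧸ H) ↔ N ⊓ H = ⊥ := by
  rw [eq_bot_iff]
  constructor
  · intro hsr h ⟨hhN, hhH⟩
    refine hsr h hhN ((1 : G) : G ⧸ H) ?_
    rw [MulAction.Quotient.smul_mk, smul_eq_mul, mul_one, QuotientGroup.eq]
    simpa using hhH
  · intro hNH n hn a ha
    obtain ⟨g, rfl⟩ := QuotientGroup.mk_surjective a
    rw [MulAction.Quotient.smul_mk, smul_eq_mul, QuotientGroup.eq, mul_inv_rev] at ha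
    have hconj := hNH ⟨by simpa using hN.conj_mem n⁻¹ (N.inv_mem hn) g⁻¹, ha⟩
    rwa [mem_bot, mul_assoc, inv_mul_eq_one, right_eq_mul, inv_eq_one] at hconj

theorem isSemiprimitiveAction_quotient_iff (H : Subgroup G) :
    IsSemiprimitiveAction G (G ⧸ H) ↔ ∀ N : Subgroup G, N.Normal → N ⊔ H = ⊤ ∨ N ⊓ H = ⊥ :=
  (and_iff_right (MulAction.isPretransitive_quotient G H)).trans <| forall_congr' fun N =>
    forall_congr' fun _ => by rw [isTransitiveOn_quotient_iff, isSemiregularOn_quotient_iff]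

theorem exists_normal_le_sup_of_commutator_mem {K H M : Subgroup G} [K.Normal] [M.Normal]
    (hsup : K ⊔ H = ⊤) {h : G} (hh : h ∈ H) (hcomm : ∀ k ∈ K, h * k * h⁻¹ * k⁻¹ ∈ M) :
    ∃ N : Subgroup G, N.Normal ∧ N ≤ M ⊔ H ∧ h ∈ N := by
  set π := QuotientGroup.mk' M
  have hπ : Function.Surjective π := QuotientGroup.mk'_surjective M
  have : (K.map π).Normal := Normal.map inferInstance π hπ
  have hsup' : K.map π ⊔ H.map π = ⊤ := by rw [← map_sup, hsup, map_top_of_surjective π hπ]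
  have := normal_inf_centralizer hsup'
  refine ⟨(H.map π ⊓ centralizer (K.map π)).comap π, inferInstance, ?_, ?_⟩
  · calc _ ≤ (H.map π).comap π := comap_mono inf_le_left
      _ = M ⊔ H := by rw [comap_map_eq, QuotientGroup.ker_mk', sup_comm]
  · refine ⟨mem_map_of_mem π hh, ?_⟩
    rintro _ ⟨k, hk, rfl⟩
    rw [← map_mul, ← map_mul]
    refine (QuotientGroup.eq_iff_div_mem.mpr ?_).symm
    simpa [div_eq_mul_inv, mul_assoc] using hcomm k hk

end Subgroup

open Subgroup in
theorem stmt0_general {G : Type*} [Group G] (K H : Subgroup G) [K.Normal]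
    (hdisj : K ⊓ H = ⊥) (hsup : K ⊔ H = ⊤) :
    IsSemiprimitiveAction G (G ⧸ H) ↔
      ∀ M : Subgroup G, M ≤ K → M ≠ K →
        (∀ k ∈ K, ∀ m ∈ M, k * m * k⁻¹ ∈ M) →
        (∀ h ∈ H, ∀ m ∈ M, h * m * h⁻¹ ∈ M) →
        ∀ h ∈ H, (∀ k ∈ K, h * k * h⁻¹ * k⁻¹ ∈ M) → h = 1 := by
  rw [isSemiprimitiveAction_quotient_iff]
  constructor
  · intro hsemi M hMK hMne hKM hHM h hh hcomm
    have : M.Normal :=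
      normal_of_sup_eq_top hsup (le_normalizer_iff.mpr hKM) (le_normalizer_iff.mpr hHM)
    obtain ⟨N, hN, hNle, hhN⟩ := exists_normal_le_sup_of_commutator_mem hsup hh hcomm
    rcases hsemi N hN with htop | hbot
    · have hMH : M ⊔ H = ⊤ := top_le_iff.mp (htop ▸ sup_le hNle le_sup_right)
      exact absurd (eq_of_sup_eq_top_of_inf_eq_bot hMK hdisj hMH) hMne
    · have : h ∈ N ⊓ H := ⟨hhN, hh⟩
      rwa [hbot, mem_bot] at this
  · intro hfaith N hN
    refine or_iff_not_imp_left.mpr fun hNH => eq_bot_iff.mpr fun h ⟨hhN, hh⟩ => ?_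
    have hNK : (N ⊓ K).Normal := inferInstance
    refine hfaith (N ⊓ K) inf_le_right ?_ (fun k _ m hm => hNK.conj_mem m hm k)
      (fun k _ m hm => hNK.conj_mem m hm k) h hh fun k hk => ?_
    · intro hMK
      exact hNH (top_le_iff.mp (hsup ▸ sup_le_sup_right (inf_eq_right.mp hMK) H))
    · exact commutator_le_inf N K (commutator_mem_commutator hhN hk)

/-- Theorem 2.2: for `G = K ⋊ H`, `G` is semiprimitive on `G/H` iff `H` acts faithfully
on every nontrivial `H`-invariant quotient of `K`. -/
theorem stmt0 {G : Type*} [Group G] [Finite G] (K H : Subgroup G) [K.Normal]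
    (hdisj : K ⊓ H = ⊥) (hsup : K ⊔ H = ⊤) :
    IsSemiprimitiveAction G (G ⧸ H) ↔
      ∀ M : Subgroup G, M ≤ K → M ≠ K →
        (∀ k ∈ K, ∀ m ∈ M, k * m * k⁻¹ ∈ M) →
        (∀ h ∈ H, ∀ m ∈ M, h * m * h⁻¹ ∈ M) →
        ∀ h ∈ H, (∀ k ∈ K, h * k * h⁻¹ * k⁻¹ ∈ M) → h = 1 :=
  stmt0_general K H hdisj hsup
end

section
/- Let G = K ⋊ H be a finite group such that for every normal subgroup M of K that is H-invariant and proper in K, H acts faithfully on K/M. Then for every nontrivial normal subgroup N of H one has K = [K, N]. -/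
/-!
If `[K, N] ≠ K`, then `M = [K, N]` is a proper subgroup of `K` normalized by both `K` and `H`
(an element normalizing `K` and `N` normalizes `[K, N]`), and every `n ∈ N` acts trivially on
`K / M` because `n k n⁻¹ k⁻¹ = ⁅n, k⁆ ∈ [N, K] = [K, N]`. Faithfulness then forces `N = 1`.
-/

open scoped commutatorElement

namespace Subgroup

variable {G : Type*} [Group G]

theorem inf_normalizer_le_normalizer_commutator (A B : Subgroup G) :
    normalizer A ⊓ normalizer B ≤ normalizer ((⁅A, B⁆ : Subgroup G) : Set G) := by
  intro g hg
  have hA := mem_normalizer_iff_map_conj_eq.mp (mem_inf.mp hg).1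
  have hB := mem_normalizer_iff_map_conj_eq.mp (mem_inf.mp hg).2
  rw [mem_normalizer_iff_map_conj_eq, map_commutator, hA, hB]

theorem conj_mul_inv_mem_commutator {K N : Subgroup G} {k n : G} (hk : k ∈ K) (hn : n ∈ N) :
    n * k * n⁻¹ * k⁻¹ ∈ ⁅K, N⁆ :=
  commutator_comm N K ▸ commutator_mem_commutator hn hk

end Subgroup

open Subgroup in
theorem stmt1_general {G : Type*} [Group G] (K H : Subgroup G) [K.Normal]
    (hfaith : ∀ M : Subgroup G, M ≤ K → M ≠ K →
      (∀ k ∈ K, ∀ m ∈ M, k * m * k⁻¹ ∈ M) →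
      (∀ h ∈ H, ∀ m ∈ M, h * m * h⁻¹ ∈ M) →
      ∀ h ∈ H, (∀ k ∈ K, h * k * h⁻¹ * k⁻¹ ∈ M) → h = 1) :
    ∀ N : Subgroup G, N ≤ H → N ≠ ⊥ →
      (∀ h ∈ H, ∀ n ∈ N, h * n * h⁻¹ ∈ N) → ⁅K, N⁆ = K := by
  intro N hNH hNne hNnorm
  by_contra hne
  have hK : K ≤ normalizer (⁅K, N⁆ : Subgroup G) := normalizer_commutator_ge_left K N
  have hH : H ≤ normalizer (⁅K, N⁆ : Subgroup G) :=
    (le_inf (normalizer_eq_top_iff.mpr ‹K.Normal› ▸ le_top) (le_normalizer_iff.mpr hNnorm)).trans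
      (inf_normalizer_le_normalizer_commutator K N)
  refine hNne <| (eq_bot_iff_forall N).mpr fun n hn => ?_
  exact hfaith ⁅K, N⁆ (commutator_le_left K N) hne (le_normalizer_iff.mp hK)
    (le_normalizer_iff.mp hH) n (hNH hn) fun k hk => conj_mul_inv_mem_commutator hk hn

/-- For `G = K ⋊ H` (internal), if `H` acts faithfully on every nontrivial `H`-invariant
quotient of `K`, then `K = [K, N]` for every nontrivial normal subgroup `N` of `H`. -/
theorem stmt1 {G : Type*} [Group G] [Finite G] (K H : Subgroup G) [K.Normal]
    (hdisj : K ⊓ H = ⊥) (hsup : K ⊔ H = ⊤)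
    (hfaith : ∀ M : Subgroup G, M ≤ K → M ≠ K →
      (∀ k ∈ K, ∀ m ∈ M, k * m * k⁻¹ ∈ M) →
      (∀ h ∈ H, ∀ m ∈ M, h * m * h⁻¹ ∈ M) →
      ∀ h ∈ H, (∀ k ∈ K, h * k * h⁻¹ * k⁻¹ ∈ M) → h = 1) :
    ∀ N : Subgroup G, N ≤ H → N ≠ ⊥ →
      (∀ h ∈ H, ∀ n ∈ N, h * n * h⁻¹ ∈ N) → ⁅K, N⁆ = K :=
  stmt1_general K H hfaith
end

section
/- Let G be a finite semiprimitive permutation group with point stabiliser H and with a soluble regular normal subgroup K. Then the centraliser of K in G is contained in K. -/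
/-!
Write `c • a = s • a` with `s ∈ K` for a centralising element `c`. Then `g = s⁻¹ * c` fixes `a`
and maps `k • a` to `⁅s⁻¹, k⁆ • k • a`, so it fixes every orbit of `R = ⁅K, K⁆`. The kernel of
the action of `G` on the `R`-orbits is a normal subgroup containing `g`. If it is semiregular,
then `g = 1` and `c = s ∈ K`. If it is transitive, so is `R`, and regularity of `K` forces
`R = K`; a perfect soluble group is trivial, so `G` acts trivially and `c = 1`.
-/

open scoped commutatorElement

namespace Subgroup

variable {G : Type*} [Group G] (Ω : Type*) [MulAction G Ω]

def orbitKernel (R : Subgroup G) : Subgroup G where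
  carrier := {g | ∀ ω : Ω, ∃ r ∈ R, g • ω = r • ω}
  one_mem' ω := ⟨1, R.one_mem, rfl⟩
  mul_mem' {g h} hg hh ω := by
    obtain ⟨r, hr, hhω⟩ := hh ω
    obtain ⟨r', hr', hgω⟩ := hg (r • ω)
    exact ⟨r' * r, R.mul_mem hr' hr, by rw [mul_smul, hhω, hgω, mul_smul]⟩
  inv_mem' {g} hg ω := by
    obtain ⟨r, hr, hgω⟩ := hg (g⁻¹ • ω)
    refine ⟨r⁻¹, R.inv_mem hr, ?_⟩
    rw [smul_inv_smul] at hgω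
    exact (inv_smul_eq_iff.mpr hgω).symm

theorem orbitKernel_normal (R : Subgroup G) [R.Normal] : (R.orbitKernel Ω).Normal where
  conj_mem g hg y ω := by
    obtain ⟨r, hr, hgω⟩ := hg (y⁻¹ • ω)
    refine ⟨y * r * y⁻¹, Normal.conj_mem ‹_› r hr y, ?_⟩
    simp only [mul_smul, hgω]

variable {Ω}

theorem isTransitiveOn_of_orbitKernel {R : Subgroup G}
    (h : (R.orbitKernel Ω).IsTransitiveOn Ω) : R.IsTransitiveOn Ω := by
  intro a b
  obtain ⟨g, hg, rfl⟩ := h a b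
  obtain ⟨r, hr, hga⟩ := hg a
  exact ⟨r, hr, hga.symm⟩

theorem le_of_isTransitiveOn_of_isSemiregularOn [Nonempty Ω] {R K : Subgroup G} (hRK : R ≤ K)
    (hR : R.IsTransitiveOn Ω) (hK : K.IsSemiregularOn Ω) : K ≤ R := by
  intro k hk
  obtain ⟨a⟩ := ‹Nonempty Ω›
  obtain ⟨r, hr, hra⟩ := hR a (k • a)
  have : k⁻¹ * r = 1 :=
    hK _ (K.mul_mem (K.inv_mem hk) (hRK hr)) a (by rw [mul_smul, hra, inv_smul_smul])
  rwa [← inv_mul_eq_one.mp this] at hr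

theorem inv_mul_mem_orbitKernel_commutator {K : Subgroup G} (hK : K.IsTransitiveOn Ω)
    {c s : G} (hc : c ∈ centralizer (K : Set G)) (hs : s ∈ K) {a : Ω} (hcs : c • a = s • a) :
    s⁻¹ * c ∈ ⁅K, K⁆.orbitKernel Ω := by
  intro ω
  obtain ⟨k, hk, rfl⟩ := hK a ω
  refine ⟨⁅s⁻¹, k⁆, commutator_mem_commutator (K.inv_mem hs) hk, ?_⟩
  calc (s⁻¹ * c) • k • a = (s⁻¹ * k) • c • a := by
        rw [smul_smul, smul_smul, mul_assoc, ← mem_centralizer_iff.mp hc k hk, mul_assoc]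
    _ = ⁅s⁻¹, k⁆ • k • a := by
        rw [hcs, smul_smul, smul_smul, commutatorElement_def]
        group

theorem eq_one_of_isTransitiveOn_bot [FaithfulSMul G Ω] (h : (⊥ : Subgroup G).IsTransitiveOn Ω)
    (g : G) : g = 1 := by
  refine eq_of_smul_eq_smul (α := Ω) fun ω => ?_
  obtain ⟨n, hn, hnω⟩ := h ω (g • ω)
  rw [← hnω, mem_bot.mp hn, one_smul]

theorem eq_bot_of_isSolvable_of_le_commutator {H : Subgroup G} [Group.IsSolvable H]
    (h : H ≤ ⁅H, H⁆) : H = ⊥ := by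
  by_contra hH
  have : Nontrivial H := (nontrivial_iff_ne_bot H).mpr hH
  refine (Group.IsSolvable.commutator_lt_top_of_nontrivial H).ne
    (map_injective H.subtype_injective ?_)
  rw [_root_.commutator_def, map_commutator, ← MonoidHom.range_eq_map, range_subtype]
  exact le_antisymm H.commutator_le_self h

end Subgroup

theorem stmt3_general {G Ω : Type*} [Group G] [MulAction G Ω] [FaithfulSMul G Ω]
    (hsp : IsSemiprimitiveAction G Ω) (K : Subgroup G) [K.Normal]
    (hsol : IsSolvable K) (htrans : K.IsTransitiveOn Ω) (hsreg : K.IsSemiregularOn Ω) :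
    Subgroup.centralizer (K : Set G) ≤ K := by
  intro c hc
  rcases isEmpty_or_nonempty Ω with hΩ | hΩ
  · rw [Subgroup.eq_one_of_isTransitiveOn_bot (Ω := Ω) (fun ω => isEmptyElim ω) c]
    exact K.one_mem
  have ⟨a⟩ := hΩ
  obtain ⟨s, hs, hsa⟩ := htrans a (c • a)
  rcases hsp.2 _ (⁅K, K⁆.orbitKernel_normal Ω) with hM | hM
  · have : Group.IsSolvable K := hsol
    have hKR : K ≤ ⁅K, K⁆ := Subgroup.le_of_isTransitiveOn_of_isSemiregularOn
      K.commutator_le_self (Subgroup.isTransitiveOn_of_orbitKernel hM) hsreg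
    rw [Subgroup.eq_one_of_isTransitiveOn_bot (Ω := Ω)
      (Subgroup.eq_bot_of_isSolvable_of_le_commutator hKR ▸ htrans) c]
    exact K.one_mem
  · have hsc : s⁻¹ * c = 1 := hM _
      (Subgroup.inv_mul_mem_orbitKernel_commutator htrans hc hs hsa.symm) a
      (by rw [mul_smul, ← hsa, inv_smul_smul])
    rwa [← inv_mul_eq_one.mp hsc]

/-- If `G` is a finite semiprimitive permutation group with a soluble regular normal
subgroup `K`, then `C_G(K) ≤ K`. -/
theorem stmt3 {G Ω : Type*} [Group G] [Finite G] [MulAction G Ω] [FaithfulSMul G Ω]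
    (hsp : IsSemiprimitiveAction G Ω) (K : Subgroup G) [K.Normal]
    (hsol : IsSolvable K) (htrans : K.IsTransitiveOn Ω) (hsreg : K.IsSemiregularOn Ω) :
    Subgroup.centralizer (K : Set G) ≤ K :=
  stmt3_general hsp K hsol htrans hsreg
end

section
/- Let G be a finite semiprimitive permutation group with a soluble regular normal subgroup K. Then every transitive normal subgroup of G contains K, and every semiregular normal subgroup of G is contained in K. In particular, K is the unique regular normal subgroup of G. -/
/-!
Translate to the action of `G` on the cosets of a point stabiliser `H` and induct on `|G|`.
Semiprimitivity and the hypotheses on `K` pass to `G ⧸ M` for every normal `M ≤ K`, so for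
`M ≠ 1` induction gives `K ≤ TM` for a transitive normal `T`, and `S ≤ K` for a semiregular
normal `S` as long as `SM` is still semiregular. With `M = K ∩ T`, `M = S ∩ K` or `M = K'` two
cases remain. Either `K ≤ TK'` (for `S`: `SK'` is transitive, so `K ≤ SK'` by the first part),
which makes the soluble group `K ⧸ (K ∩ T)` perfect, hence trivial; or `K` is abelian and meets
`T` (resp. `S`) trivially, so `T` (resp. `S`) centralises `K`, whose centraliser is `K` itself
because `H` is core-free.
-/

namespace Subgroup

open QuotientGroup
open scoped Pointwise

variable {G : Type*} [Group G]

theorem eq_bot_of_le_commutator_self {L : Subgroup G} [Group.IsSolvable L] (h : L ≤ ⁅L, L⁆) :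
    L = ⊥ := by
  refine (eq_or_ne L ⊥).resolve_right fun hL => ?_
  rw [← nontrivial_iff_ne_bot] at hL
  have hlt := Group.IsSolvable.commutator_lt_top_of_nontrivial L
  rw [← map_subtype_lt_map_subtype, _root_.commutator_def, map_commutator,
    ← MonoidHom.range_eq_map, range_subtype] at hlt
  exact hlt.not_ge h

theorem le_of_le_sup_commutator {A K : Subgroup G} [A.Normal] [Group.IsSolvable K]
    (h : K ≤ A ⊔ ⁅K, K⁆) : K ≤ A := by
  have : Group.IsSolvable (K.map (mk' A)) :=
    Group.isSolvable_of_surjective ((mk' A).subgroupMap_surjective K)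
  have hperfect : K.map (mk' A) ≤ ⁅K.map (mk' A), K.map (mk' A)⁆ := by
    simpa only [map_sup, map_mk'_self, bot_sup_eq, map_commutator] using map_mono (f := mk' A) h
  simpa only [map_eq_bot_iff, ker_mk'] using eq_bot_of_le_commutator_self hperfect

theorem le_sup_of_map_mk'_le {A B M : Subgroup G} [M.Normal]
    (h : A.map (mk' M) ≤ B.map (mk' M)) : A ≤ B ⊔ M := by
  rwa [map_le_iff_le_comap, comap_map_eq, ker_mk'] at h

theorem map_mk'_inf_map_mk'_eq_bot {A H M : Subgroup G} [M.Normal] (h : (A ⊔ M) ⊓ H = ⊥) :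
    A.map (mk' M) ⊓ H.map (mk' M) = ⊥ := by
  rw [eq_bot_iff]
  rintro _ ⟨⟨a, ha, hax⟩, ⟨x, hx, rfl⟩⟩
  have hxa : x = a * (a⁻¹ * x) := by group
  have hx' : a⁻¹ * x ∈ M := by
    rw [← ker_mk' M, MonoidHom.mem_ker, map_mul, map_inv, ← hax, inv_mul_cancel]
  have hx1 : x ∈ (A ⊔ M) ⊓ H := ⟨hxa ▸ mul_mem (mem_sup_left ha) (mem_sup_right hx'), hx⟩
  rw [h, mem_bot] at hx1
  simp [hx1]

theorem map_mk'_sup_map_mk'_eq_top {A H M : Subgroup G} [M.Normal] (h : A ⊔ H = ⊤) :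
    A.map (mk' M) ⊔ H.map (mk' M) = ⊤ := by
  rw [← map_sup, h, map_top_of_surjective _ (mk'_surjective M)]

theorem le_centralizer_of_inf_eq_bot {A B : Subgroup G} [A.Normal] [B.Normal] (h : A ⊓ B = ⊥) :
    A ≤ centralizer B :=
  commutator_eq_bot_iff_le_centralizer.mp (le_bot_iff.mp (h ▸ commutator_le_inf A B))

theorem card_quotient_lt [Finite G] {M : Subgroup G} [M.Normal] (hM : M ≠ ⊥) :
    Nat.card (G ⧸ M) < Nat.card G := by
  rw [card_eq_card_quotient_mul_card_subgroup M]
  exact lt_mul_of_one_lt_right Nat.card_pos ((one_lt_card_iff_ne_bot M).mpr hM)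

theorem centralizer_le_of_le_centralizer {H K : Subgroup G} [K.Normal] (hKH : K ⊔ H = ⊤)
    (hcore : H.normalCore = ⊥) (hK : K ≤ centralizer K) : centralizer K ≤ K := by
  intro c hc
  obtain ⟨h, hh, k, hk, rfl⟩ : c ∈ (H : Set G) * (K : Set G) := by
    rw [← mul_normal, sup_comm, hKH]; trivial
  have hcent : h ∈ centralizer K := by
    simpa using mul_mem hc (inv_mem (hK hk))
  have hh1 : h ∈ H.normalCore := by
    intro g
    obtain ⟨x, hx, k', hk', rfl⟩ : g ∈ (H : Set G) * (K : Set G) := by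
      rw [← mul_normal, sup_comm, hKH]; trivial
    have hconj : x * k' * h * (x * k')⁻¹ = x * h * x⁻¹ := by
      rw [mul_assoc x, mem_centralizer_iff.mp hcent k' hk']; group
    rw [hconj]
    exact mul_mem (mul_mem hx hh) (inv_mem hx)
  rw [hcore, mem_bot] at hh1
  simpa [hh1] using hk

/-- `G` acts semiprimitively on `G ⧸ H` and `K` is a soluble regular normal subgroup for this
action: for a normal subgroup `N`, transitivity on `G ⧸ H` means `N ⊔ H = ⊤` and semiregularity
means `N ⊓ H = ⊥`. -/
structure IsSolvableRegularNormal (H K : Subgroup G) : Prop where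
  semiprimitive : ∀ N : Subgroup G, N.Normal → N ⊔ H = ⊤ ∨ N ⊓ H = ⊥
  normal : K.Normal
  isSolvable : Group.IsSolvable K
  sup_eq_top : K ⊔ H = ⊤
  inf_eq_bot : K ⊓ H = ⊥

namespace IsSolvableRegularNormal

variable {H K : Subgroup G}

theorem normalCore_eq_bot (hHK : IsSolvableRegularNormal H K) (hK : K ≠ ⊥) :
    H.normalCore = ⊥ := by
  rw [← inf_eq_left.mpr H.normalCore_le]
  refine (hHK.semiprimitive H.normalCore inferInstance).resolve_left fun htop => hK ?_
  rw [sup_eq_right.mpr H.normalCore_le] at htop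
  simpa [htop] using hHK.inf_eq_bot

theorem map {M : Subgroup G} [M.Normal] (hHK : IsSolvableRegularNormal H K) (hMK : M ≤ K) :
    IsSolvableRegularNormal (H.map (mk' M)) (K.map (mk' M)) where
  semiprimitive N hN := by
    have hsurj := mk'_surjective M
    rcases hHK.semiprimitive (N.comap (mk' M)) (hN.comap _) with htop | hbot
    · left
      simpa [map_sup, map_comap_eq_self_of_surjective hsurj, map_top_of_surjective _ hsurj]
        using congrArg (Subgroup.map (mk' M)) htop
    · right
      rw [← sup_eq_left.mpr (le_comap_mk' M N)] at hbot
      simpa [map_comap_eq_self_of_surjective hsurj] using map_mk'_inf_map_mk'_eq_bot hbot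
  normal := have := hHK.normal; this.map _ (mk'_surjective M)
  isSolvable :=
    have := hHK.isSolvable
    Group.isSolvable_of_surjective ((mk' M).subgroupMap_surjective K)
  sup_eq_top := map_mk'_sup_map_mk'_eq_top hHK.sup_eq_top
  inf_eq_bot := map_mk'_inf_map_mk'_eq_bot (by rw [sup_eq_left.mpr hMK, hHK.inf_eq_bot])

theorem le_of_sup_eq_top [Finite G] (hHK : IsSolvableRegularNormal H K) {T : Subgroup G}
    [hTn : T.Normal] (hT : T ⊔ H = ⊤) : K ≤ T := by
  induction hn : Nat.card G using Nat.strong_induction_on generalizing G with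
  | _ n IH =>
  have := hHK.normal
  have := hHK.isSolvable
  have ih_quotient (M : Subgroup G) [M.Normal] (hMK : M ≤ K) (hM : M ≠ ⊥) : K ≤ T ⊔ M :=
    have := hTn.map _ (mk'_surjective M)
    le_sup_of_map_mk'_le (IH _ (hn ▸ card_quotient_lt hM) (hHK.map hMK)
      (map_mk'_sup_map_mk'_eq_top hT) rfl)
  rcases eq_or_ne K ⊥ with hK | hK
  · simp [hK]
  by_cases hab : ⁅K, K⁆ = ⊥
  · by_cases hKT : K ⊓ T = ⊥
    · exfalso
      have hTK : T ≤ K := (le_centralizer_of_inf_eq_bot (inf_comm K T ▸ hKT)).trans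
        (centralizer_le_of_le_centralizer hHK.sup_eq_top (hHK.normalCore_eq_bot hK)
          (commutator_eq_bot_iff_le_centralizer.mp hab))
      rw [← inf_eq_left.mpr hTK, inf_comm, hKT, bot_sup_eq] at hT
      exact hK (by simpa [hT] using hHK.inf_eq_bot)
    · simpa using ih_quotient (K ⊓ T) inf_le_left hKT
  · exact le_of_le_sup_commutator (ih_quotient _ (commutator_le_left K K) hab)

theorem le_of_inf_eq_bot [Finite G] (hHK : IsSolvableRegularNormal H K) {S : Subgroup G}
    [hSn : S.Normal] (hS : S ⊓ H = ⊥) : S ≤ K := by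
  induction hn : Nat.card G using Nat.strong_induction_on generalizing G with
  | _ n IH =>
  have := hHK.normal
  have := hHK.isSolvable
  have ih_quotient (M : Subgroup G) [M.Normal] (hMK : M ≤ K) (hM : M ≠ ⊥) (hSM : (S ⊔ M) ⊓ H = ⊥) :
      S ≤ K :=
    have := hSn.map _ (mk'_surjective M)
    sup_eq_left.mpr hMK ▸ le_sup_of_map_mk'_le (IH _ (hn ▸ card_quotient_lt hM) (hHK.map hMK)
      (map_mk'_inf_map_mk'_eq_bot hSM) rfl)
  rcases eq_or_ne K ⊥ with hK | hK
  · have hH : H = ⊤ := by simpa [hK] using hHK.sup_eq_top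
    rw [hK, ← hS, hH, inf_top_eq]
  by_cases hSK : S ⊓ K = ⊥
  · rcases hHK.semiprimitive (S ⊔ ⁅K, K⁆) inferInstance with htop | hbot
    · exfalso
      have hKS : K ≤ S := le_of_le_sup_commutator (hHK.le_of_sup_eq_top htop)
      exact hK (by simpa [inf_comm, inf_eq_left.mpr hKS] using hSK)
    · by_cases hab : ⁅K, K⁆ = ⊥
      · exact (le_centralizer_of_inf_eq_bot hSK).trans (centralizer_le_of_le_centralizer
          hHK.sup_eq_top (hHK.normalCore_eq_bot hK) (commutator_eq_bot_iff_le_centralizer.mp hab))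
      · exact ih_quotient _ (commutator_le_left K K) hab hbot
  · exact ih_quotient (S ⊓ K) inf_le_right hSK (by rwa [sup_inf_self])

end IsSolvableRegularNormal

variable {Ω : Type*} [MulAction G Ω] {N : Subgroup G}

theorem IsTransitiveOn.sup_stabilizer_eq_top (h : N.IsTransitiveOn Ω) (a : Ω) :
    N ⊔ MulAction.stabilizer G a = ⊤ := by
  refine eq_top_iff.mpr fun g _ => ?_
  obtain ⟨n, hn, hna⟩ := h a (g • a)
  have hstab : n⁻¹ * g ∈ MulAction.stabilizer G a := by
    rw [MulAction.mem_stabilizer_iff, mul_smul, ← hna, inv_smul_smul]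
  simpa using mul_mem (mem_sup_left hn) (mem_sup_right hstab)

theorem IsSemiregularOn.inf_stabilizer_eq_bot (h : N.IsSemiregularOn Ω) (a : Ω) :
    N ⊓ MulAction.stabilizer G a = ⊥ :=
  eq_bot_iff.mpr fun n hn => h n hn.1 a hn.2

end Subgroup

/-- Theorem 2.4: if `G` is a finite semiprimitive group with a soluble regular normal
subgroup `K`, then every transitive normal subgroup contains `K`, every semiregular normal
subgroup is contained in `K`, and `K` is the unique regular normal subgroup. -/
theorem stmt4 {G Ω : Type*} [Group G] [Finite G] [MulAction G Ω] [FaithfulSMul G Ω]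
    (hsp : IsSemiprimitiveAction G Ω) (K : Subgroup G) [K.Normal]
    (hsol : IsSolvable K) (htrans : K.IsTransitiveOn Ω) (hsreg : K.IsSemiregularOn Ω) :
    (∀ T : Subgroup G, T.Normal → T.IsTransitiveOn Ω → K ≤ T) ∧
    (∀ S : Subgroup G, S.Normal → S.IsSemiregularOn Ω → S ≤ K) ∧
    (∀ K' : Subgroup G, K'.Normal → K'.IsTransitiveOn Ω → K'.IsSemiregularOn Ω → K' = K) := by
  rcases isEmpty_or_nonempty Ω with _ | ⟨⟨a⟩⟩
  · have : Subsingleton G := ⟨fun g g' => eq_of_smul_eq_smul (α := Ω) isEmptyElim⟩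
    exact ⟨fun _ _ _ => (Subsingleton.elim _ _).le, fun _ _ _ => (Subsingleton.elim _ _).le,
      fun _ _ _ _ => Subsingleton.elim _ _⟩
  have hHK : (MulAction.stabilizer G a).IsSolvableRegularNormal K :=
    { semiprimitive := fun N hN => (hsp.2 N hN).imp
        (·.sup_stabilizer_eq_top a) (·.inf_stabilizer_eq_bot a)
      normal := inferInstance
      isSolvable := hsol
      sup_eq_top := htrans.sup_stabilizer_eq_top a
      inf_eq_bot := hsreg.inf_stabilizer_eq_bot a }
  have le_of_transitive (T : Subgroup G) (_ : T.Normal) (hT : T.IsTransitiveOn Ω) : K ≤ T :=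
    hHK.le_of_sup_eq_top (hT.sup_stabilizer_eq_top a)
  have le_of_semiregular (S : Subgroup G) (_ : S.Normal) (hS : S.IsSemiregularOn Ω) : S ≤ K :=
    hHK.le_of_inf_eq_bot (hS.inf_stabilizer_eq_bot a)
  exact ⟨le_of_transitive, le_of_semiregular, fun K' hn ht hr =>
    (le_of_semiregular K' hn hr).antisymm (le_of_transitive K' hn ht)⟩
end

section
/- Let G be a finite semiprimitive permutation group with a soluble regular normal subgroup K. Then every nilpotent normal subgroup of G is contained in K; in particular, the Fitting subgroup of G equals the Fitting subgroup of K. -/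
/-!
Work with a point stabiliser `H`, so that the action is that of `G` on `G ⧸ H`, and induct on
`|G|`. Let `A` be a minimal normal subgroup of `G` inside `K`. If `A < K`, then `G ⧸ A` acting
on `(G ⧸ A) ⧸ (H A ⧸ A)` (the `A`-orbits) is again faithful and semiprimitive, with soluble regular
normal subgroup `K ⧸ A`, and induction gives `N ≤ K A = K`. If `A = K`, then `K` is abelian, hence
self-centralising since `H` is core-free. A nilpotent normal `N` either meets `K` trivially, or
contains `K`, and then its centre is a nontrivial normal subgroup of `G` inside `C_G(K) = K`, so
it equals `K`. Either way `N` centralises `K`, so `N ≤ K`.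

For the Fitting subgroups: every normal nilpotent subgroup of `K` is generated by its Sylow
subgroups, each of which lies in some `O_p(K)`; these are characteristic in `K`, hence normal
`p`-subgroups of `G`.
-/

open MulAction

namespace Subgroup

variable {G : Type*} [Group G]

/-- `H` is the point stabiliser of a faithful semiprimitive action, read on the coset space
`G ⧸ H`: there a normal subgroup `M` is transitive iff `M ⊔ H = ⊤` and semiregular iff
`Disjoint M H`. -/
def IsSemiprimitiveStabilizer (H : Subgroup G) : Prop :=
  H.normalCore = ⊥ ∧ ∀ M : Subgroup G, M.Normal → M ⊔ H = ⊤ ∨ Disjoint M H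

theorem le_of_le_sup_of_disjoint {A H M : Subgroup G} [A.Normal] (hAM : A ≤ M)
    (hMH : Disjoint M H) (hM : M ≤ A ⊔ H) : M ≤ A := by
  intro m hm
  obtain ⟨a, ha, h, hh, rfl⟩ := mem_sup_of_normal_left.mp (hM hm)
  have hhM : h ∈ M := by simpa using M.mul_mem (M.inv_mem (hAM ha)) hm
  rw [disjoint_def.mp hMH hhM hh, mul_one]
  exact ha

theorem disjoint_map_of_disjoint_comap {G' : Type*} [Group G'] (f : G →* G')
    {M : Subgroup G'} {H : Subgroup G} (h : Disjoint (M.comap f) H) : Disjoint M (H.map f) := by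
  rw [disjoint_def]
  rintro _ hx ⟨y, hy, rfl⟩
  rw [disjoint_def.mp h hx hy, map_one]

theorem IsSemiprimitiveStabilizer.map_mk' {H A : Subgroup G} [A.Normal]
    (hH : H.IsSemiprimitiveStabilizer) (hAH : A ⊔ H ≠ ⊤) :
    (H.map (QuotientGroup.mk' A)).IsSemiprimitiveStabilizer := by
  set π := QuotientGroup.mk' A
  have hπ : Function.Surjective π := QuotientGroup.mk'_surjective A
  have hA : ∀ M : Subgroup (G ⧸ A), A ≤ M.comap π := fun M => by
    simpa [π] using π.ker_le_comap M
  refine ⟨?_, fun M hM => ?_⟩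
  · set M := (H.map π).normalCore
    have hMH : M.comap π ≤ A ⊔ H :=
      calc M.comap π ≤ (H.map π).comap π := comap_mono (normalCore_le _)
        _ = A ⊔ H := by rw [comap_map_eq, QuotientGroup.ker_mk', sup_comm]
    rcases hH.2 (M.comap π) inferInstance with hsup | hdisj
    · exact absurd (top_le_iff.mp (hsup ▸ sup_le hMH le_sup_right)) hAH
    · rw [← map_comap_eq_self_of_surjective hπ M, eq_bot_iff, map_le_iff_le_comap,
        MonoidHom.comap_bot, QuotientGroup.ker_mk']
      exact le_of_le_sup_of_disjoint (hA M) hdisj hMH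
  · refine (hH.2 (M.comap π) (hM.comap π)).imp (fun hsup => ?_) (disjoint_map_of_disjoint_comap π)
    rw [← map_comap_eq_self_of_surjective hπ M, ← map_sup, hsup, map_top_of_surjective π hπ]

theorem centralizer_le_of_sup_eq_top {H K : Subgroup G} (hH : H.normalCore = ⊥) [K.Normal]
    (hKc : K ≤ centralizer K) (hsup : K ⊔ H = ⊤) : centralizer K ≤ K := by
  have hdecomp : ∀ g : G, ∃ k ∈ K, ∃ h ∈ H, k * h = g := fun g =>
    mem_sup_of_normal_left.mp (hsup ▸ mem_top g)
  intro c hc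
  obtain ⟨k, hk, h, hh, rfl⟩ := hdecomp c
  have hhC : h ∈ centralizer K := by simpa using mul_mem (inv_mem (hKc hk)) hc
  suffices h ∈ H.normalCore by
    rw [hH, mem_bot] at this
    rwa [this, mul_one]
  intro g
  obtain ⟨k', hk', h', hh', rfl⟩ := hdecomp g
  have hconj : h' * h * h'⁻¹ ∈ centralizer K := Normal.conj_mem inferInstance h hhC h'
  have hcomm : k' * (h' * h * h'⁻¹) = (h' * h * h'⁻¹) * k' := mem_centralizer_iff.mp hconj k' hk'
  have : k' * h' * h * (k' * h')⁻¹ = h' * h * h'⁻¹ := by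
    calc k' * h' * h * (k' * h')⁻¹ = k' * (h' * h * h'⁻¹) * k'⁻¹ := by group
      _ = h' * h * h'⁻¹ := by rw [hcomm]; group
  rw [this]
  exact H.mul_mem (H.mul_mem hh' hh) (H.inv_mem hh')

theorem le_centralizer_of_isSolvable_of_minimal {K : Subgroup G} [K.Normal] [Group.IsSolvable K]
    (hmin : ∀ B : Subgroup G, B.Normal → B ≤ K → B = ⊥ ∨ B = K) : K ≤ centralizer K := by
  rcases eq_or_ne K ⊥ with rfl | hK
  · exact bot_le
  rcases hmin ⁅K, K⁆ inferInstance (commutator_le_right K K) with h | h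
  · exact commutator_eq_bot_iff_le_centralizer.mp h
  · have : Nontrivial K := (nontrivial_iff_ne_bot K).mpr hK
    have hlt : ⁅K, K⁆ < K := by
      rw [← K.range_subtype, MonoidHom.range_eq_map, ← map_commutator, map_subtype_lt_map_subtype]
      exact Group.IsSolvable.commutator_lt_top_of_nontrivial K
    exact absurd h hlt.ne

theorem le_centralizer_of_isNilpotent_of_minimal {N K : Subgroup G} [N.Normal] [K.Normal]
    [Group.IsNilpotent N] (hCK : centralizer K ≤ K)
    (hmin : ∀ B : Subgroup G, B.Normal → B ≤ K → B = ⊥ ∨ B = K) : N ≤ centralizer K := by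
  rcases hmin (N ⊓ K) inferInstance inf_le_right with h | h
  · exact commutator_eq_bot_iff_le_centralizer.mp (le_bot_iff.mp (h ▸ commutator_le_inf N K))
  have hKN : K ≤ N := inf_eq_right.mp h
  rcases eq_or_ne K ⊥ with rfl | hK
  · exact fun x _ => mem_centralizer_iff.mpr fun y hy => by rw [mem_bot.mp hy]; group
  have : Nontrivial N := (nontrivial_iff_ne_bot N).mpr (ne_bot_of_le_ne_bot hK hKN)
  set Z := (center N).map N.subtype
  have hZN : Z ≤ centralizer N := by
    rintro _ ⟨z, hz, rfl⟩
    exact mem_centralizer_iff.mpr fun n hn => congrArg Subtype.val (mem_center_iff.mp hz ⟨n, hn⟩)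
  have hZK : Z ≤ K := hZN.trans ((centralizer_le hKN).trans hCK)
  have hZ : Z ≠ ⊥ := (map_eq_bot_iff_of_injective _ N.subtype_injective).not.mpr
    (Group.IsNilpotent.center_ne_bot N)
  rcases hmin Z inferInstance hZK with h | h
  · exact absurd h hZ
  · exact le_centralizer_iff.mpr (h ▸ hZN)

theorem le_of_isSolvable_of_minimal {H K N : Subgroup G} (hH : H.normalCore = ⊥) [K.Normal]
    [Group.IsSolvable K] (hsup : K ⊔ H = ⊤)
    (hmin : ∀ B : Subgroup G, B.Normal → B ≤ K → B = ⊥ ∨ B = K) [N.Normal]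
    [Group.IsNilpotent N] : N ≤ K :=
  have hCK := centralizer_le_of_sup_eq_top hH (le_centralizer_of_isSolvable_of_minimal hmin) hsup
  (le_centralizer_of_isNilpotent_of_minimal hCK hmin).trans hCK

theorem le_of_isSemiprimitiveStabilizer [Finite G] {H K N : Subgroup G}
    (hH : H.IsSemiprimitiveStabilizer) [K.Normal] [Group.IsSolvable K] (hsup : K ⊔ H = ⊤)
    (hdisj : Disjoint K H) [N.Normal] [Group.IsNilpotent N] : N ≤ K := by
  induction hn : Nat.card G using Nat.strong_induction_on generalizing G with | _ n ih
  rcases eq_or_ne K ⊥ with rfl | hK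
  · rw [bot_sup_eq] at hsup
    rw [← hH.1, hsup, normalCore_eq_self]
    exact le_top
  obtain ⟨A, ⟨hA, hAbot, hAK⟩, hAmin⟩ :=
    (Set.toFinite {B : Subgroup G | B.Normal ∧ B ≠ ⊥ ∧ B ≤ K}).exists_minimal
      ⟨K, inferInstance, hK, le_rfl⟩
  rcases hAK.eq_or_lt with rfl | hAK
  · refine le_of_isSolvable_of_minimal hH.1 hsup fun B hB hBA => ?_
    exact (eq_or_ne B ⊥).imp_right fun hBbot =>
      le_antisymm hBA (hAmin ⟨hB, hBbot, hBA.trans hAK⟩ hBA)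
  set π := QuotientGroup.mk' A
  have hπ : Function.Surjective π := QuotientGroup.mk'_surjective A
  have hAH : A ⊔ H ≠ ⊤ := fun h =>
    hAK.not_ge (le_of_le_sup_of_disjoint hAK.le hdisj (h ▸ le_top))
  have hcard : Nat.card (G ⧸ A) < n := by
    rw [← hn, card_eq_card_quotient_mul_card_subgroup A]
    exact lt_mul_of_one_lt_right Nat.card_pos ((one_lt_card_iff_ne_bot A).mpr hAbot)
  have : (K.map π).Normal := Normal.map inferInstance π hπ
  have : (N.map π).Normal := Normal.map inferInstance π hπ
  have : Group.IsSolvable (K.map π) := Group.isSolvable_of_surjective (π.subgroupMap_surjective K)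
  have : Group.IsNilpotent (N.map π) := Group.nilpotent_of_surjective _ (π.subgroupMap_surjective N)
  have hKA : (K.map π).comap π = K := by
    rw [comap_map_eq, QuotientGroup.ker_mk', sup_eq_left.mpr hAK.le]
  have hNK := ih _ hcard (K := K.map π) (N := N.map π) (hH.map_mk' hAH)
    (by rw [← map_sup, hsup, map_top_of_surjective π hπ])
    (disjoint_map_of_disjoint_comap π (hKA.symm ▸ hdisj)) rfl
  rwa [map_le_map_iff, QuotientGroup.ker_mk', sup_eq_left.mpr hAK.le] at hNK

end Subgroup

section Action

variable {G Ω : Type*} [Group G] [MulAction G Ω]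

theorem Subgroup.IsTransitiveOn.sup_stabilizer_eq_top_s5 {N : Subgroup G} (hN : N.IsTransitiveOn Ω)
    (ω : Ω) : N ⊔ stabilizer G ω = ⊤ := by
  refine eq_top_iff.mpr fun g _ => ?_
  obtain ⟨n, hn, hnω⟩ := hN ω (g • ω)
  have hstab : n⁻¹ * g ∈ stabilizer G ω := by
    rw [mem_stabilizer_iff, mul_smul, ← hnω, inv_smul_smul]
  simpa using Subgroup.mul_mem_sup hn hstab

theorem Subgroup.IsSemiregularOn.disjoint_stabilizer {N : Subgroup G} (hN : N.IsSemiregularOn Ω)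
    (ω : Ω) : Disjoint N (stabilizer G ω) :=
  Subgroup.disjoint_def.mpr fun hn hω => hN _ hn ω hω

theorem normalCore_stabilizer_eq_bot [IsPretransitive G Ω] [FaithfulSMul G Ω] (ω : Ω) :
    (stabilizer G ω).normalCore = ⊥ := by
  refine eq_bot_iff.mpr fun g hg => Subgroup.mem_bot.mpr (eq_of_smul_eq_smul (α := Ω) fun x => ?_)
  obtain ⟨h, rfl⟩ := exists_smul_eq G ω x
  have hconj : (h⁻¹ * g * h) • ω = ω := by simpa using hg h⁻¹
  rw [one_smul, ← smul_left_cancel_iff h⁻¹, inv_smul_smul, ← mul_smul, ← mul_smul, hconj]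

theorem IsSemiprimitiveAction.isSemiprimitiveStabilizer [FaithfulSMul G Ω]
    (hsp : IsSemiprimitiveAction G Ω) (ω : Ω) : (stabilizer G ω).IsSemiprimitiveStabilizer :=
  have := hsp.1
  ⟨normalCore_stabilizer_eq_bot ω, fun M hM =>
    (hsp.2 M hM).imp (·.sup_stabilizer_eq_top ω) (·.disjoint_stabilizer ω)⟩

theorem IsSemiprimitiveAction.le_of_isNilpotent [Finite G] [FaithfulSMul G Ω]
    (hsp : IsSemiprimitiveAction G Ω) {K : Subgroup G} [K.Normal] [Group.IsSolvable K]
    (htrans : K.IsTransitiveOn Ω) (hsreg : K.IsSemiregularOn Ω) (N : Subgroup G) [N.Normal]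
    [Group.IsNilpotent N] : N ≤ K := by
  cases isEmpty_or_nonempty Ω with
  | inl =>
    have : Subsingleton G := ⟨fun g h => eq_of_smul_eq_smul fun x : Ω => isEmptyElim x⟩
    exact fun x _ => Subsingleton.elim x 1 ▸ K.one_mem
  | inr hΩ =>
    obtain ⟨ω⟩ := hΩ
    exact Subgroup.le_of_isSemiprimitiveStabilizer (hsp.isSemiprimitiveStabilizer ω)
      (htrans.sup_stabilizer_eq_top_s5 ω) (hsreg.disjoint_stabilizer ω)

end Action

namespace Subgroup

variable {G : Type*} [Group G]

variable (G) in
def fitting : Subgroup G :=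
  sSup {N : Subgroup G | N.Normal ∧ Group.IsNilpotent N}

theorem le_fitting (N : Subgroup G) [N.Normal] [Group.IsNilpotent N] : N ≤ fitting G :=
  le_sSup ⟨inferInstance, inferInstance⟩

theorem fitting_le_map_of_forall_le {K : Subgroup G}
    (hK : ∀ N : Subgroup G, N.Normal → Group.IsNilpotent N → N ≤ K) :
    fitting G ≤ (fitting K).map K.subtype := by
  refine sSup_le fun N ⟨hN, hNnil⟩ => ?_
  have : (N.subgroupOf K).Normal := hN.subgroupOf K
  have : Group.IsNilpotent (N.subgroupOf K) :=
    Group.nilpotent_of_mulEquiv (subgroupOfEquivOfLe (hK N hN hNnil)).symm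
  rw [← map_subgroupOf_eq_of_le (hK N hN hNnil)]
  exact map_mono (le_fitting _)

def pCore (p : ℕ) (G : Type*) [Group G] : Subgroup G :=
  sSup {P : Subgroup G | P.Normal ∧ IsPGroup p P}

theorem le_pCore {p : ℕ} (P : Subgroup G) [P.Normal] (hP : IsPGroup p P) : P ≤ pCore p G :=
  le_sSup ⟨inferInstance, hP⟩

theorem isPGroup_pCore (p : ℕ) : IsPGroup p (pCore p G) :=
  Sylow.sSup_of_normal _ (fun _ hP => hP.2) fun _ hP => hP.1

instance pCore_characteristic (p : ℕ) : (pCore p G).Characteristic := by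
  refine characteristic_iff_le_comap.mpr fun φ => sSup_le fun P ⟨hP, hPp⟩ => ?_
  rw [← map_le_iff_le_comap]
  have : (P.map φ.toMonoidHom).Normal := hP.map _ φ.surjective
  exact le_pCore _ (hPp.map _)

theorem le_of_forall_sylow_le [Finite G] {M D : Subgroup G}
    (h : ∀ p : ℕ, p.Prime → ∀ P : Sylow p M, (P : Subgroup M).map M.subtype ≤ D) : M ≤ D := by
  suffices Nat.card M ∣ Nat.card (D ⊓ M : Subgroup G) from
    inf_eq_right.mp (eq_of_le_of_card_ge inf_le_right (Nat.le_of_dvd Nat.card_pos this))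
  refine (Nat.factorization_prime_le_iff_dvd Nat.card_pos.ne' Nat.card_pos.ne').mp fun p hp => ?_
  have : Fact p.Prime := ⟨hp⟩
  let P : Sylow p M := default
  have hPD : (P : Subgroup M).map M.subtype ≤ D ⊓ M :=
    le_inf (h p hp P) (map_subtype_le _)
  rw [← hp.pow_dvd_iff_le_factorization Nat.card_pos.ne', ← P.card_eq_multiplicity,
    ← card_map_of_injective M.subtype_injective]
  exact card_dvd_of_le hPD

theorem map_fitting_le_fitting [Finite G] (K : Subgroup G) [K.Normal] :
    (fitting K).map K.subtype ≤ fitting G := by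
  refine map_le_iff_le_comap.mpr (sSup_le fun M ⟨hM, hMnil⟩ => le_of_forall_sylow_le ?_)
  intro p hp P
  have : Fact p.Prime := ⟨hp⟩
  have : (P : Subgroup M).Characteristic := P.characteristic_of_normal inferInstance
  have hPK : (P : Subgroup M).map M.subtype ≤ pCore p K :=
    le_pCore _ (P.isPGroup'.map _)
  have : Group.IsNilpotent ((pCore p K).map K.subtype) :=
    ((isPGroup_pCore p).map K.subtype).isNilpotent
  exact hPK.trans (map_le_iff_le_comap.mp (le_fitting _))

end Subgroup

/-- Lemma 2.5: if `G` is a finite semiprimitive group with a soluble regular normal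
subgroup `K`, then every nilpotent normal subgroup of `G` is contained in `K`; in
particular the Fitting subgroup of `G` (the join of all nilpotent normal subgroups)
equals the Fitting subgroup of `K`. -/
theorem stmt5 {G Ω : Type*} [Group G] [Finite G] [MulAction G Ω] [FaithfulSMul G Ω]
    (hsp : IsSemiprimitiveAction G Ω) (K : Subgroup G) [K.Normal]
    (hsol : IsSolvable K) (htrans : K.IsTransitiveOn Ω) (hsreg : K.IsSemiregularOn Ω) :
    (∀ N : Subgroup G, N.Normal → Group.IsNilpotent N → N ≤ K) ∧
    sSup {N : Subgroup G | N.Normal ∧ Group.IsNilpotent N} =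
      Subgroup.map K.subtype (sSup {N : Subgroup K | N.Normal ∧ Group.IsNilpotent N}) := by
  have : Group.IsSolvable K := hsol
  have hle : ∀ N : Subgroup G, N.Normal → Group.IsNilpotent N → N ≤ K :=
    fun N _ _ => hsp.le_of_isNilpotent htrans hsreg N
  exact ⟨hle, le_antisymm (Subgroup.fitting_le_map_of_forall_le hle)
    (Subgroup.map_fitting_le_fitting K)⟩
end

section
/- Let Γ be a connected graph, G ≤ Aut(Γ), and let {x,y} be an edge of Γ. Suppose K ≤ G_x ∩ G_y is a subgroup such that the image of N_{G_x}(K) in Sym(Γ(x)) is transitive on Γ(x) and the image of N_{G_y}(K) in Sym(Γ(y)) is transitive on Γ(y). Then K = 1. -/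
/-!
Call a vertex `v` good (`NormalizerLocallyTransitive`) if `K` fixes `v` and `N_{G_v}(K)` is
transitive on `Γ(v)`. Elements of `N_G(K)` map good vertices to good vertices. If `u` and `v` are
adjacent good vertices, then `N_{G_v}(K)` moves `u` to every neighbour of `v`, so all neighbours of
`v` are good. Starting from the edge `{x, y}`, connectivity makes every vertex good, so `K` fixes
`Γ` pointwise and is trivial by faithfulness.
-/

open MulAction

namespace SimpleGraph

variable {V : Type*} {Γ : SimpleGraph V}

theorem Connected.forall_of_adj_of_forall_adj (hconn : Γ.Connected) {S : V → Prop} {x y : V}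
    (hxy : Γ.Adj x y) (hx : S x) (hy : S y)
    (step : ∀ u v w, Γ.Adj u v → Γ.Adj v w → S u → S v → S w) (v : V) : S v := by
  suffices ∀ {a b : V} (_ : Γ.Walk a b), S a → (∃ u, Γ.Adj u a ∧ S u) → S b from
    this (hconn y v).some hy ⟨x, hxy, hx⟩
  intro a b p
  induction p with
  | nil => exact fun ha _ => ha
  | cons hab _ ih =>
    rintro ha ⟨u, hua, hu⟩
    exact ih (step u _ _ hua hab hu ha) ⟨_, hab, ha⟩

end SimpleGraph

section NormalizerLocallyTransitive

variable {G V : Type*} [Group G] [MulAction G V]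

def NormalizerLocallyTransitive (Γ : SimpleGraph V) (K : Subgroup G) (v : V) : Prop :=
  K ≤ stabilizer G v ∧ ∀ a b : V, Γ.Adj v a → Γ.Adj v b →
    ∃ g ∈ stabilizer G v ⊓ Subgroup.normalizer (K : Set G), g • a = b

theorem Subgroup.le_stabilizer_smul_of_mem_normalizer {K : Subgroup G} {g : G}
    (hg : g ∈ Subgroup.normalizer (K : Set G)) {v : V} (hK : K ≤ stabilizer G v) :
    K ≤ stabilizer G (g • v) := by
  rw [stabilizer_smul_eq_stabilizer_map_conj, ← Subgroup.mem_normalizer_iff_map_conj_eq.mp hg]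
  exact Subgroup.map_mono hK

variable {Γ : SimpleGraph V} {K : Subgroup G}

theorem NormalizerLocallyTransitive.smul
    (hact : ∀ (g : G) (u v : V), Γ.Adj u v → Γ.Adj (g • u) (g • v))
    {g : G} (hg : g ∈ Subgroup.normalizer (K : Set G)) {v : V}
    (hv : NormalizerLocallyTransitive Γ K v) : NormalizerLocallyTransitive Γ K (g • v) := by
  refine ⟨Subgroup.le_stabilizer_smul_of_mem_normalizer hg hv.1, fun a b ha hb => ?_⟩
  have hadj : ∀ c, Γ.Adj (g • v) c → Γ.Adj v (g⁻¹ • c) := fun c hc => by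
    simpa using hact g⁻¹ _ _ hc
  obtain ⟨h, ⟨hhv, hhK⟩, hab⟩ := hv.2 _ _ (hadj a ha) (hadj b hb)
  have hgK := (Subgroup.normalizer (K : Set G)).inv_mem hg
  refine ⟨g * h * g⁻¹, ⟨?_, mul_mem (mul_mem hg hhK) hgK⟩, ?_⟩
  · simp [mem_stabilizer_iff, mul_smul, mem_stabilizer_iff.mp hhv]
  · simp [mul_smul, hab]

theorem NormalizerLocallyTransitive.of_adj
    (hact : ∀ (g : G) (u v : V), Γ.Adj u v → Γ.Adj (g • u) (g • v))
    {u v w : V} (huv : Γ.Adj u v) (hvw : Γ.Adj v w)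
    (hu : NormalizerLocallyTransitive Γ K u) (hv : NormalizerLocallyTransitive Γ K v) :
    NormalizerLocallyTransitive Γ K w := by
  obtain ⟨g, ⟨-, hgK⟩, rfl⟩ := hv.2 u w huv.symm hvw
  exact hu.smul hact hgK

end NormalizerLocallyTransitive

theorem Subgroup.eq_bot_of_le_stabilizer {G V : Type*} [Group G] [MulAction G V]
    [FaithfulSMul G V] {K : Subgroup G} (hK : ∀ v : V, K ≤ stabilizer G v) : K = ⊥ :=
  (Subgroup.eq_bot_iff_forall K).mpr fun k hk =>
    FaithfulSMul.eq_of_smul_eq_smul fun v : V => by simpa using hK v hk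

theorem stmt8_general {G V : Type*} [Group G] [MulAction G V] [FaithfulSMul G V]
    (Γ : SimpleGraph V) (hconn : Γ.Connected)
    (hact : ∀ (g : G) (u v : V), Γ.Adj u v → Γ.Adj (g • u) (g • v))
    (x y : V) (hxy : Γ.Adj x y)
    (K : Subgroup G)
    (hK : K ≤ MulAction.stabilizer G x ⊓ MulAction.stabilizer G y)
    (hx : ∀ u v : V, Γ.Adj x u → Γ.Adj x v →
      ∃ g ∈ MulAction.stabilizer G x ⊓ Subgroup.normalizer (K : Set G), g • u = v)
    (hy : ∀ u v : V, Γ.Adj y u → Γ.Adj y v →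
      ∃ g ∈ MulAction.stabilizer G y ⊓ Subgroup.normalizer (K : Set G), g • u = v) :
    K = ⊥ := by
  have hgood : ∀ v, NormalizerLocallyTransitive Γ K v :=
    hconn.forall_of_adj_of_forall_adj hxy ⟨hK.trans inf_le_left, hx⟩ ⟨hK.trans inf_le_right, hy⟩
      fun _ _ _ huv hvw hu hv => hu.of_adj hact huv hvw hv
  exact Subgroup.eq_bot_of_le_stabilizer fun v => (hgood v).1

/-- Lemma 3.2(a): let `Γ` be a finite connected graph, `G ≤ Aut Γ`, `{x,y}` an edge and
`K ≤ G_x ∩ G_y`. If the images of `N_{G_x}(K)` and `N_{G_y}(K)` on `Γ(x)` resp. `Γ(y)`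
are transitive, then `K = 1`. -/
theorem stmt8 {G V : Type*} [Group G] [Finite V] [MulAction G V] [FaithfulSMul G V]
    (Γ : SimpleGraph V) (hconn : Γ.Connected)
    (hact : ∀ (g : G) (u v : V), Γ.Adj u v → Γ.Adj (g • u) (g • v))
    (x y : V) (hxy : Γ.Adj x y)
    (K : Subgroup G)
    (hK : K ≤ MulAction.stabilizer G x ⊓ MulAction.stabilizer G y)
    (hx : ∀ u v : V, Γ.Adj x u → Γ.Adj x v →
      ∃ g ∈ MulAction.stabilizer G x ⊓ Subgroup.normalizer (K : Set G), g • u = v)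
    (hy : ∀ u v : V, Γ.Adj y u → Γ.Adj y v →
      ∃ g ∈ MulAction.stabilizer G y ⊓ Subgroup.normalizer (K : Set G), g • u = v) :
    K = ⊥ :=
  stmt8_general Γ hconn hact x y hxy K hK hx hy
end

section
/- Let V be a finite-dimensional vector space over a finite field F_{q^a} with q prime, H = GL(V), and W = V ⊕ ... ⊕ V (m copies) with H acting diagonally. Then K = W ⋊ H acting on Ω = W (with W acting by translations and H linearly) is semiprimitive: every normal subgroup of K is transitive or semiregular on W. -/
/-!
Every element of `G` is affine, `x ↦ g • x + t` with `g ∈ GL(V)` acting diagonally. If a normal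
subgroup `N` contains some `n ≠ 1` with a fixed point, the linear part `g` of `n` is not the
identity, and the commutators of `n` with the translations by `w` are the translations by
`g • w - w`. Taking `w` supported on a single coordinate and conjugating by `GL(V)`, which is
transitive on nonzero vectors, shows that `N` contains every translation, so `N` is transitive.
-/

namespace Equiv.Perm

variable {W : Type*} [AddCommGroup W]

def HasLinearPart (σ L : Perm W) : Prop :=
  ∀ w x, σ (w + x) = L w + σ x

namespace HasLinearPart

variable {σ τ L M : Perm W}

theorem addLeft (w : W) : (Equiv.addLeft w : Perm W).HasLinearPart 1 :=
  fun u x => add_left_comm w u x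

theorem toPerm {H : Type*} [Group H] [DistribMulAction H W] (h : H) :
    (MulAction.toPerm h : Perm W).HasLinearPart (MulAction.toPerm h) :=
  fun w x => smul_add h w x

theorem mul (hσ : σ.HasLinearPart L) (hτ : τ.HasLinearPart M) :
    (σ * τ).HasLinearPart (L * M) := fun w x => by
  rw [Perm.mul_apply, Perm.mul_apply, hτ, hσ, Perm.mul_apply]

theorem inv (hσ : σ.HasLinearPart L) : σ⁻¹.HasLinearPart L⁻¹ := fun w x =>
  σ.injective <| by
    rw [hσ, Perm.inv_def, Perm.inv_def, apply_symm_apply, apply_symm_apply, apply_symm_apply]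

theorem conj_addLeft (hσ : σ.HasLinearPart L) (w : W) :
    σ * Equiv.addLeft w * σ⁻¹ = Equiv.addLeft (L w) := by
  ext x
  simp [hσ w]

theorem eq_one_of_apply_eq (hσ : σ.HasLinearPart 1) {a : W} (ha : σ a = a) : σ = 1 := by
  ext x
  simpa [ha] using hσ (x - a) a

end HasLinearPart

variable (W) in
def affinePerms (H : Type*) [Group H] [MulAction H W] : Subgroup (Perm W) where
  carrier := {σ | ∃ h : H, σ.HasLinearPart (MulAction.toPermHom H W h)}
  one_mem' := ⟨1, fun _ _ => by simp⟩
  mul_mem' := by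
    rintro σ τ ⟨g, hσ⟩ ⟨h, hτ⟩
    exact ⟨g * h, by simpa only [map_mul] using hσ.mul hτ⟩
  inv_mem' := by
    rintro σ ⟨h, hσ⟩
    exact ⟨h⁻¹, by simpa only [map_inv] using hσ.inv⟩

def translations (N : Subgroup (Perm W)) : AddSubgroup W where
  carrier := {u | Equiv.addLeft u ∈ N}
  zero_mem' := by simp [N.one_mem]
  add_mem' hu hv := by simpa using N.mul_mem hu hv
  neg_mem' hu := by simpa using N.inv_mem hu

variable {N : Subgroup (Perm W)}

theorem mem_translations {u : W} : u ∈ translations N ↔ Equiv.addLeft u ∈ N := Iff.rfl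

theorem sub_mem_translations
    (hnorm : ∀ w : W, ∀ n ∈ N, Equiv.addLeft w * n * (Equiv.addLeft w)⁻¹ ∈ N)
    {n L : Perm W} (hn : n ∈ N) (hL : n.HasLinearPart L) (w : W) :
    L w - w ∈ translations N := by
  have : n * (Equiv.addLeft w * n⁻¹ * (Equiv.addLeft w)⁻¹) ∈ N :=
    N.mul_mem hn (hnorm w _ (N.inv_mem hn))
  rwa [← mul_assoc, ← mul_assoc, hL.conj_addLeft, neg_addLeft, ← addLeft_add,
    ← sub_eq_add_neg] at this

theorem smul_mem_translations {H : Type*} [Group H] [DistribMulAction H W]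
    (hnorm : ∀ h : H, ∀ n ∈ N, MulAction.toPerm h * n * (MulAction.toPerm h)⁻¹ ∈ N)
    (h : H) {u : W} (hu : u ∈ translations N) : h • u ∈ translations N := by
  have := hnorm h _ hu
  rwa [(HasLinearPart.toPerm h).conj_addLeft] at this

end Equiv.Perm

theorem LinearEquiv.exists_apply_eq_of_ne_zero {K V : Type*} [DivisionRing K] [AddCommGroup V]
    [Module K V] {x y : V} (hx : x ≠ 0) (hy : y ≠ 0) : ∃ g : V ≃ₗ[K] V, g x = y := by
  obtain ⟨g, hg⟩ := Submodule.exists_linearEquiv_restrict_eq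
    ((toSpanNonzeroSingleton K V x hx).symm.trans (toSpanNonzeroSingleton K V y hy))
  refine ⟨g, ?_⟩
  rw [← hg ⟨x, Submodule.mem_span_singleton_self x⟩, trans_apply, ← coord, coord_self,
    toSpanNonzeroSingleton_one]

theorem AddSubgroup.eq_top_of_smul_mem_of_single_mem {K V ι : Type*} [DivisionRing K]
    [AddCommGroup V] [Module K V] [Fintype ι] [DecidableEq ι] {T : AddSubgroup (ι → V)}
    (hT : ∀ g : V ≃ₗ[K] V, ∀ u ∈ T, g • u ∈ T) (hsingle : ∀ i, ∃ x ≠ 0, Pi.single i x ∈ T) :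
    T = ⊤ := by
  have hsingle' (i : ι) (y : V) : Pi.single i y ∈ T := by
    obtain ⟨x, hx, hxT⟩ := hsingle i
    rcases eq_or_ne y 0 with rfl | hy
    · simp
    obtain ⟨g, rfl⟩ := LinearEquiv.exists_apply_eq_of_ne_zero (K := K) hx hy
    simpa only [← Pi.single_smul', LinearEquiv.smul_def] using hT g _ hxT
  refine eq_top_iff.2 fun u _ => ?_
  rw [← Finset.univ_sum_single u]
  exact sum_mem fun i _ => hsingle' i (u i)

open Equiv.Perm in
theorem closure_le_affinePerms (F V ι : Type*) [DivisionRing F] [AddCommGroup V] [Module F V] :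
    Subgroup.closure
      ({σ : Equiv.Perm (ι → V) | ∃ w : ι → V, σ = Equiv.addLeft w} ∪
       {σ : Equiv.Perm (ι → V) | ∃ g : V ≃ₗ[F] V, ∀ w i, σ w i = g (w i)}) ≤
      affinePerms (ι → V) (V ≃ₗ[F] V) := by
  refine (Subgroup.closure_le _).2 ?_
  rintro σ (⟨w, rfl⟩ | ⟨g, hσ⟩)
  · exact ⟨1, by rw [map_one]; exact HasLinearPart.addLeft w⟩
  · refine ⟨g, fun w x => funext fun i => ?_⟩
    simp [hσ]

open Equiv.Perm in
theorem stmt14_general (F : Type*) [Field F]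
    (V : Type*) [AddCommGroup V] [Module F V] (m : ℕ)
    (G : Subgroup (Equiv.Perm (Fin m → V)))
    (hG : G = Subgroup.closure
      ({σ : Equiv.Perm (Fin m → V) | ∃ w : Fin m → V, σ = Equiv.addLeft w} ∪
       {σ : Equiv.Perm (Fin m → V) | ∃ g : V ≃ₗ[F] V, ∀ w i, σ w i = g (w i)})) :
    ∀ N : Subgroup (Equiv.Perm (Fin m → V)), N ≤ G →
      (∀ g ∈ G, ∀ n ∈ N, g * n * g⁻¹ ∈ N) →
      (∀ a b : Fin m → V, ∃ n ∈ N, n a = b) ∨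
      (∀ n ∈ N, ∀ a : Fin m → V, n a = a → n = 1) := by
  intro N hNG hnorm
  subst hG
  have hnorm_addLeft (w : Fin m → V) :
      ∀ n ∈ N, Equiv.addLeft w * n * (Equiv.addLeft w)⁻¹ ∈ N :=
    hnorm _ (Subgroup.subset_closure (Or.inl ⟨w, rfl⟩))
  have hnorm_toPerm (h : V ≃ₗ[F] V) :
      ∀ n ∈ N, MulAction.toPerm h * n * (MulAction.toPerm h)⁻¹ ∈ N :=
    hnorm _ (Subgroup.subset_closure (Or.inr ⟨h, fun _ _ => rfl⟩))
  refine or_iff_not_imp_right.2 fun hsemireg => ?_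
  push Not at hsemireg
  obtain ⟨n, hn, a, hna, hn1⟩ := hsemireg
  obtain ⟨g, hg⟩ := closure_le_affinePerms F V (Fin m) (hNG hn)
  obtain ⟨v, hv⟩ : ∃ v, g v ≠ v := by
    by_contra! hg1
    refine hn1 (HasLinearPart.eq_one_of_apply_eq ?_ hna)
    convert hg
    ext w i
    simp [hg1]
  have htrans : translations N = ⊤ := by
    refine AddSubgroup.eq_top_of_smul_mem_of_single_mem
      (fun h _ => smul_mem_translations hnorm_toPerm h) fun i => ⟨g v - v, sub_ne_zero.2 hv, ?_⟩
    rw [Pi.single_sub]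
    simpa only [MulAction.toPermHom_apply, MulAction.toPerm_apply, ← Pi.single_smul',
      LinearEquiv.smul_def] using
      sub_mem_translations hnorm_addLeft hn hg (Pi.single i v)
  exact fun a b =>
    ⟨Equiv.addLeft (b - a), mem_translations.1 (htrans ▸ AddSubgroup.mem_top _), by simp⟩

/-- Example: let `V` be a finite-dimensional vector space over a finite field `F`, and
`W = V ⊕ ⋯ ⊕ V` (`m` copies). Let `K = W ⋊ GL(V)` act on `Ω = W`, with `W` acting by
translations and `GL(V)` acting diagonally: realised as the subgroup `G` of `Perm W`
generated by the translations and the diagonal linear maps. Then `K` is semiprimitive on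
`W`: every normal subgroup of `G` is transitive or semiregular on `W`. -/
theorem stmt14 (F : Type*) [Field F] [Finite F]
    (V : Type*) [AddCommGroup V] [Module F V] [FiniteDimensional F V] (m : ℕ)
    (G : Subgroup (Equiv.Perm (Fin m → V)))
    (hG : G = Subgroup.closure
      ({σ : Equiv.Perm (Fin m → V) | ∃ w : Fin m → V, σ = Equiv.addLeft w} ∪
       {σ : Equiv.Perm (Fin m → V) | ∃ g : V ≃ₗ[F] V, ∀ w i, σ w i = g (w i)})) :
    ∀ N : Subgroup (Equiv.Perm (Fin m → V)), N ≤ G →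
      (∀ g ∈ G, ∀ n ∈ N, g * n * g⁻¹ ∈ N) →
      (∀ a b : Fin m → V, ∃ n ∈ N, n a = b) ∨
      (∀ n ∈ N, ∀ a : Fin m → V, n a = a → n = 1) :=
  stmt14_general F V m G hG
end

section
/- Let G be a finite semiprimitive permutation group on Ω with point stabiliser H and soluble regular normal subgroup K, and let N be a normal subgroup of G contained in K with N ≠ K. Then in the induced (faithful, semiprimitive) action of G/N on the cosets of HN/N, the subgroup K/N is a soluble regular normal subgroup. -/
open MulAction

namespace Subgroup

variable {G Ω : Type*} [Group G] [MulAction G Ω]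

theorem IsTransitiveOn.sup_stabilizer_eq_top_s17 {K : Subgroup G} (hK : K.IsTransitiveOn Ω)
    (a : Ω) : K ⊔ stabilizer G a = ⊤ := by
  refine eq_top_iff.mpr fun g _ => ?_
  obtain ⟨k, hk, hka⟩ := hK a (g • a)
  have hstab : k⁻¹ * g ∈ stabilizer G a := by
    rw [mem_stabilizer_iff, mul_smul, ← hka, inv_smul_smul]
  simpa using mul_mem (mem_sup_left hk) (mem_sup_right hstab)

theorem IsSemiregularOn.inf_stabilizer_eq_bot_s17 {K : Subgroup G} (hK : K.IsSemiregularOn Ω)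
    (a : Ω) : K ⊓ stabilizer G a = ⊥ :=
  (eq_bot_iff_forall _).mpr fun _ ⟨hk, hka⟩ => hK _ hk a hka

theorem inf_sup_eq_inf_sup_of_normal_le {K N : Subgroup G} [N.Normal] (hNK : N ≤ K)
    (S : Subgroup G) : K ⊓ (S ⊔ N) = K ⊓ S ⊔ N :=
  SetLike.coe_injective <| by
    rw [coe_inf, mul_normal, mul_normal, inf_mul_assoc K S N hNK]

theorem IsSemiregularOn.inf_stabilizer_sup_eq {K N : Subgroup G} [N.Normal]
    (hK : K.IsSemiregularOn Ω) (hNK : N ≤ K) (a : Ω) : K ⊓ (stabilizer G a ⊔ N) = N := by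
  rw [inf_sup_eq_inf_sup_of_normal_le hNK, hK.inf_stabilizer_eq_bot_s17, bot_sup_eq]

theorem stabilizer_sup_map_conj (N : Subgroup G) [N.Normal] (a : Ω) (g : G) :
    (stabilizer G a ⊔ N).map (MulAut.conj g).toMonoidHom = stabilizer G (g • a) ⊔ N := by
  rw [map_sup, ← stabilizer_smul_eq_stabilizer_map_conj, MulEquiv.toMonoidHom_eq_coe,
    Normal.map_conj_eq N g]

end Subgroup

/-- In `G`, transitivity of `K/N` on the cosets of `HN/N` reads `K(HN) = G`, and its
semiregularity reads `K ∩ (HN)^g ≤ N` for all `g`. -/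
theorem stmt17_general {G Ω : Type*} [Group G] [MulAction G Ω]
    (ω : Ω) (H : Subgroup G)
    (hH : H = MulAction.stabilizer G ω)
    (K : Subgroup G) (hsol : IsSolvable K)
    (htrans : K.IsTransitiveOn Ω) (hsreg : K.IsSemiregularOn Ω)
    (N : Subgroup G) [N.Normal] (hNK : N ≤ K) :
    IsSolvable (K ⧸ N.subgroupOf K) ∧
    (K ⊔ (H ⊔ N) = ⊤) ∧
    (∀ g : G, K ⊓ (H ⊔ N).map (MulAut.conj g).toMonoidHom ≤ N) := by
  subst hH
  have : Group.IsSolvable K := hsol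
  refine ⟨inferInstanceAs (Group.IsSolvable _), ?_, fun g => ?_⟩
  · exact eq_top_mono (sup_le_sup_left le_sup_left K) (htrans.sup_stabilizer_eq_top_s17 ω)
  · rw [Subgroup.stabilizer_sup_map_conj, hsreg.inf_stabilizer_sup_eq hNK]

/-- Let `G` be a finite semiprimitive group on `Ω` with point stabiliser `H = G_ω` and
soluble regular normal subgroup `K`, and let `N ⊴ G` with `N ≤ K`, `N ≠ K`. Then, in the
induced action of `G/N` on the cosets of `HN/N`, the subgroup `K/N` is a soluble regular
normal subgroup; expressed in `G`: `K/N` is soluble, `K(HN) = G` (transitivity of `K/N`)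
and `K ∩ (HN)^g ≤ N` for all `g` (semiregularity of `K/N`). -/
theorem stmt17 {G Ω : Type*} [Group G] [Finite G] [MulAction G Ω] [FaithfulSMul G Ω]
    (hsp : IsSemiprimitiveAction G Ω) (ω : Ω) (H : Subgroup G)
    (hH : H = MulAction.stabilizer G ω)
    (K : Subgroup G) [K.Normal] (hsol : IsSolvable K)
    (htrans : K.IsTransitiveOn Ω) (hsreg : K.IsSemiregularOn Ω)
    (N : Subgroup G) [N.Normal] (hNK : N ≤ K) (hne : N ≠ K) :
    IsSolvable (K ⧸ N.subgroupOf K) ∧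
    (K ⊔ (H ⊔ N) = ⊤) ∧
    (∀ g : G, K ⊓ (H ⊔ N).map (MulAut.conj g).toMonoidHom ≤ N) :=
  stmt17_general ω H hH K hsol htrans hsreg N hNK
end
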